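/- arXiv:2602.18001 — 3 statements merged into one kernel-verified Lean document; each statement's English description precedes it below -/
import Mathlib

section
/- Let H be a real Hilbert space, G ⊆ H convex, J : H → ℝ Fréchet differentiable, and suppose J satisfies the 'h-strong convexity' inequality J(y) − J(x) − J′(x)(y − x) ≥ c‖y − x‖² − Ch for all x, y ∈ G, where c, C > 0 and h ∈ (0,1). Let x_min ∈ G be a minimizer of J on G, and let z ∈ G satisfy J(z) ≤ Mα + Mh for some constants M > 0, α ∈ (0,1). If J ≥ 0 on G, then ‖z − x_min‖² ≤ (M(α + h) + Ch)/c; in particular ‖z − x_min‖ ≤ C₁(√α + √h) for a constant C₁ depending only on c, C, M. -/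
private lemma sqrt_add_le_aux {a b : ℝ} (ha : 0 ≤ a) (hb : 0 ≤ b) :
    Real.sqrt (a + b) ≤ Real.sqrt a + Real.sqrt b := by
  have h : a + b ≤ (Real.sqrt a + Real.sqrt b) ^ 2 := by
    have := Real.sq_sqrt ha
    have := Real.sq_sqrt hb
    nlinarith [Real.sqrt_nonneg a, Real.sqrt_nonneg b]
  calc Real.sqrt (a + b) ≤ Real.sqrt ((Real.sqrt a + Real.sqrt b) ^ 2) := Real.sqrt_le_sqrt h
    _ = Real.sqrt a + Real.sqrt b := Real.sqrt_sq (by positivity)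

/-- h-strong convexity accuracy estimate (abstract Theorem 5.2): if `J` is
h-strongly convex (with defect `C*h`) and nonnegative on a convex set `G`,
`x_min` minimizes `J` on `G`, and `J(z) ≤ M*α + M*h`, then
`‖z − x_min‖² ≤ (M(α+h) + C h)/c` and `‖z − x_min‖ ≤ C₁(√α + √h)` with `C₁`
depending only on `c, C, M`. -/
theorem h_strong_convexity_accuracy
    {H : Type*} [NormedAddCommGroup H] [InnerProductSpace ℝ H]
    (c C M : ℝ) (hc : 0 < c) (hC : 0 < C) (hM : 0 < M) :
    ∃ C₁ > 0, ∀ (G : Set H), Convex ℝ G →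
      ∀ (J : H → ℝ) (J' : H → (H →L[ℝ] ℝ)),
      (∀ x ∈ G, HasFDerivAt J (J' x) x) →
      ∀ h α : ℝ, h ∈ Set.Ioo (0 : ℝ) 1 → α ∈ Set.Ioo (0 : ℝ) 1 →
      (∀ x ∈ G, ∀ y ∈ G, c * ‖y - x‖ ^ 2 - C * h ≤ J y - J x - J' x (y - x)) →
      (∀ x ∈ G, 0 ≤ J x) →
      ∀ xmin ∈ G, (∀ x ∈ G, J xmin ≤ J x) →
      ∀ z ∈ G, J z ≤ M * α + M * h →
      ‖z - xmin‖ ^ 2 ≤ (M * (α + h) + C * h) / c ∧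
        ‖z - xmin‖ ≤ C₁ * (Real.sqrt α + Real.sqrt h) := by
  refine ⟨Real.sqrt ((M + C) / c), Real.sqrt_pos.2 (by positivity), ?_⟩
  intro G hG J J' hJ' h α hh hα hsc hpos xmin hxm hmin z hz hJz
  -- variational inequality: 0 ≤ J'(xmin)(z - xmin)
  have hvi : 0 ≤ J' xmin (z - xmin) := by
    have hmin' : IsLocalMinOn J G xmin := IsMinOn.localize (fun x hx => hmin x hx)
    exact hmin'.hasFDerivWithinAt_nonneg ((hJ' xmin hxm).hasFDerivWithinAt)
      (sub_mem_posTangentConeAt_of_segment_subset (hG.segment_subset hxm hz))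
  have key : c * ‖z - xmin‖ ^ 2 - C * h ≤ J z - J xmin - J' xmin (z - xmin) :=
    hsc xmin hxm z hz
  have hJm : 0 ≤ J xmin := hpos xmin hxm
  have h1 : ‖z - xmin‖ ^ 2 ≤ (M * (α + h) + C * h) / c := by
    rw [le_div_iff₀ hc]
    nlinarith
  refine ⟨h1, ?_⟩
  have hnn : (0:ℝ) ≤ ‖z - xmin‖ := norm_nonneg _
  have h2 : ‖z - xmin‖ ≤ Real.sqrt ((M * (α + h) + C * h) / c) := by
    have := Real.sqrt_le_sqrt h1
    rwa [Real.sqrt_sq hnn] at this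
  refine h2.trans ?_
  have hα0 := hα.1.le
  have hh0 := hh.1.le
  have split : (M * (α + h) + C * h) / c = (M / c) * α + ((M + C) / c) * h := by
    field_simp; ring
  rw [split]
  calc Real.sqrt ((M / c) * α + ((M + C) / c) * h)
      ≤ Real.sqrt ((M / c) * α) + Real.sqrt (((M + C) / c) * h) :=
        sqrt_add_le_aux (by positivity) (by positivity)
    _ ≤ Real.sqrt ((M + C) / c) * Real.sqrt α + Real.sqrt ((M + C) / c) * Real.sqrt h := by
        rw [Real.sqrt_mul (by positivity), Real.sqrt_mul (by positivity)]
        have hle : Real.sqrt (M / c) ≤ Real.sqrt ((M + C) / c) := by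
          apply Real.sqrt_le_sqrt; rw [div_le_div_iff₀ hc hc]; nlinarith
        have := mul_le_mul_of_nonneg_right hle (Real.sqrt_nonneg α)
        linarith
    _ = Real.sqrt ((M + C) / c) * (Real.sqrt α + Real.sqrt h) := by ring
end

section
/- Let H be a real Hilbert space, G ⊆ H convex, J : H → ℝ Fréchet differentiable and nonnegative on G, satisfying J(y) − J(x) − J′(x)(y − x) ≥ c‖y − x‖² − Ch for all x, y ∈ G with c, C > 0, h ∈ (0,1). Let x̄ ∈ G satisfy J′(x̄)(y − x̄) ≥ −Ch for all y ∈ G (an approximate first-order optimality condition). Let (zₙ) ⊆ G be a minimizing sequence: J(zₙ) → inf_G J. Suppose z* ∈ G satisfies J(z*) ≤ M(α + h). Then there exists N such that for all n ≥ N, ‖zₙ − x̄‖² ≤ C₂(α + h) for a constant C₂ depending only on c, C, M. -/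
/-- Accuracy estimate along a minimizing sequence (abstract Theorem 5.3):
under h-strong convexity with defect `C*h`, an approximate first-order
optimality condition at `x̄`, and existence of `z* ∈ G` with `J(z*) ≤ M(α+h)`,
every minimizing sequence `(zₙ)` eventually satisfies
`‖zₙ − x̄‖² ≤ C₂(α + h)` with `C₂` depending only on `c, C, M`. -/
theorem minimizing_sequence_accuracy
    {H : Type*} [NormedAddCommGroup H] [InnerProductSpace ℝ H]
    (c C M : ℝ) (hc : 0 < c) (hC : 0 < C) (hM : 0 < M) :
    ∃ C₂ > 0, ∀ (G : Set H), Convex ℝ G →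
      ∀ (J : H → ℝ) (J' : H → (H →L[ℝ] ℝ)),
      (∀ x ∈ G, HasFDerivAt J (J' x) x) →
      ∀ h α : ℝ, h ∈ Set.Ioo (0 : ℝ) 1 → α ∈ Set.Ioo (0 : ℝ) 1 →
      (∀ x ∈ G, ∀ y ∈ G, c * ‖y - x‖ ^ 2 - C * h ≤ J y - J x - J' x (y - x)) →
      (∀ x ∈ G, 0 ≤ J x) →
      ∀ xbar ∈ G, (∀ y ∈ G, -(C * h) ≤ J' xbar (y - xbar)) →
      ∀ z : ℕ → H, (∀ n, z n ∈ G) →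
      Filter.Tendsto (fun n => J (z n)) Filter.atTop (nhds (sInf (J '' G))) →
      ∀ zstar ∈ G, J zstar ≤ M * (α + h) →
      ∃ N : ℕ, ∀ n ≥ N, ‖z n - xbar‖ ^ 2 ≤ C₂ * (α + h) := by
  refine ⟨(M + 1 + 2 * C) / c, by positivity, ?_⟩
  intro G hG J J' hJ' h α hh hα hsc hpos xbar hxbar hopt z hz hT zstar hzstar hzs
  obtain ⟨hh0, hh1⟩ := hh
  obtain ⟨hα0, hα1⟩ := hα
  have hbdd : BddBelow (J '' G) := ⟨0, by rintro _ ⟨x, hx, rfl⟩; exact hpos x hx⟩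
  have hinf_le : sInf (J '' G) ≤ J zstar := csInf_le hbdd ⟨zstar, hzstar, rfl⟩
  have hev : ∀ᶠ n in Filter.atTop, J (z n) < sInf (J '' G) + α :=
    hT (Iio_mem_nhds (by linarith))
  obtain ⟨N, hN⟩ := Filter.eventually_atTop.mp hev
  refine ⟨N, fun n hn => ?_⟩
  have h1 := hsc xbar hxbar (z n) (hz n)
  have h2 := hopt (z n) (hz n)
  have h3 : 0 ≤ J xbar := hpos xbar hxbar
  have h4 : J (z n) < M * (α + h) + α := by
    have := hN n hn; linarith
  have hkey : c * ‖z n - xbar‖ ^ 2 ≤ (M + 1 + 2 * C) * (α + h) := by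
    nlinarith [sq_nonneg (‖z n - xbar‖)]
  rw [div_mul_eq_mul_div, le_div_iff₀ hc]
  linarith [hkey]
end

section
/- Let H be a real Hilbert space, G ⊆ H convex, J : H → ℝ Fréchet differentiable and satisfying J(y) − J(x) − J′(x)(y − x) ≥ c‖y − x‖² − δ for all x, y ∈ G, with c > 0 and δ ≥ 0. If x₁, x₂ ∈ G both minimize J on G, then ‖x₁ − x₂‖² ≤ δ/c. -/
/-- Variational inequality at a minimizer on a convex set. -/
lemma var_ineq {H : Type*} [NormedAddCommGroup H] [InnerProductSpace ℝ H]
    (G : Set H) (hG : Convex ℝ G) (J : H → ℝ) (J' : H → (H →L[ℝ] ℝ))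
    {x y : H} (hx : x ∈ G) (hy : y ∈ G)
    (hd : HasFDerivAt J (J' x) x) (hmin : ∀ z ∈ G, J x ≤ J z) :
    0 ≤ J' x (y - x) := by
  have hmin' : IsLocalMinOn J G x := (isMinOn_iff.2 hmin).localize
  exact hmin'.hasFDerivWithinAt_nonneg hd.hasFDerivWithinAt
    (sub_mem_posTangentConeAt_of_segment_subset (hG.segment_subset hx hy))

/-- Approximate uniqueness under h-strong convexity with defect `δ`: two
minimizers of a functional satisfying the strong convexity inequality with
defect `δ` on a convex set are within squared distance `δ/c` of each other. -/
theorem h_strong_convexity_approximate_uniqueness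
    {H : Type*} [NormedAddCommGroup H] [InnerProductSpace ℝ H]
    (G : Set H) (hG : Convex ℝ G)
    (J : H → ℝ) (J' : H → (H →L[ℝ] ℝ))
    (hderiv : ∀ x ∈ G, HasFDerivAt J (J' x) x)
    (c δ : ℝ) (hc : 0 < c) (hδ : 0 ≤ δ)
    (hsc : ∀ x ∈ G, ∀ y ∈ G, c * ‖y - x‖ ^ 2 - δ ≤ J y - J x - J' x (y - x))
    (x₁ x₂ : H) (hx₁ : x₁ ∈ G) (hx₂ : x₂ ∈ G)
    (hmin₁ : ∀ x ∈ G, J x₁ ≤ J x) (hmin₂ : ∀ x ∈ G, J x₂ ≤ J x) :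
    ‖x₁ - x₂‖ ^ 2 ≤ δ / c := by
  have h1 : 0 ≤ J' x₁ (x₂ - x₁) :=
    var_ineq G hG J J' hx₁ hx₂ (hderiv x₁ hx₁) hmin₁
  have h2 := hsc x₁ hx₁ x₂ hx₂
  have h3 : J x₂ - J x₁ ≤ 0 := sub_nonpos.2 (hmin₂ x₁ hx₁)
  have : c * ‖x₂ - x₁‖ ^ 2 ≤ δ := by linarith
  rw [le_div_iff₀ hc, mul_comm, ← norm_neg, neg_sub]
  exact this
end
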